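/- arXiv:2409.19659 — 4 statements merged into one kernel-verified Lean document; each statement's English description precedes it below -/
import Mathlib

section
/- Fix N, S, d ≥ 1, β > 0, α ≥ 0, and a matrix Q ∈ ℝ^{S×d} with rows q_1, …, q_S. Define E : ℝ^{N×d} → ℝ on matrices K (with rows k_1, …, k_N) by E(K) = (α/2)·∑_{i=1}^N ⟨k_i, k_i⟩ − ∑_{i=1}^N β⁻¹·log(∑_{j=1}^S exp(β·⟨q_j, k_i⟩)) + log(∑_{i=1}^N exp(½·⟨k_i, k_i⟩)). Then E is differentiable, and for every K the negative gradient −∇_K E(K) is the matrix whose i-th row equals ∑_{j=1}^S softmax(β·Qk_i)_j · q_j − (α + p_i(K))·k_i, where p_i(K) = exp(½·⟨k_i, k_i⟩)/∑_{m=1}^N exp(½·⟨k_m, k_m⟩); equivalently, −∇_K E(K) = sm(β·K Qᵀ)·Q − (α·I + 𝒟(sm(½·diag(KKᵀ))))·K, where sm is applied row-wise in the first term. -/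
/-! The energy is a sum of row energies `φ(kᵢ)` plus a log-sum-exp of the row functions
`ψ(kᵢ) = ½⟨kᵢ, kᵢ⟩`. The derivative of `log ∑ᵢ exp fᵢ` is the softmax average of the `fᵢ'`,
so the partial derivative along row `i` is `φ'(kᵢ) + pᵢ ψ'(kᵢ)`; the same rule applied to the
cross-attention term inside `φ` produces the softmax average `∑ⱼ sm(β Q kᵢ)ⱼ qⱼ`. -/

open Finset Real

noncomputable def softmax {ι : Type*} [Fintype ι] (v : ι → ℝ) (i : ι) : ℝ :=
  exp (v i) / ∑ j, exp (v j)

section LogSumExp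

variable {ι E : Type*} [Fintype ι] [Nonempty ι] [NormedAddCommGroup E] [NormedSpace ℝ E]

theorem HasFDerivAt.log_sum_exp {f : ι → E → ℝ} {f' : ι → E →L[ℝ] ℝ} {x : E}
    (hf : ∀ i, HasFDerivAt (f i) (f' i) x) :
    HasFDerivAt (fun y => Real.log (∑ i, Real.exp (f i y)))
      (∑ i, softmax (fun j => f j x) i • f' i) x := by
  have hpos : 0 < ∑ i, Real.exp (f i x) := sum_pos (fun i _ => Real.exp_pos _) univ_nonempty
  convert (HasFDerivAt.fun_sum fun i _ => (hf i).exp).log hpos.ne' using 1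
  simp only [softmax, div_eq_inv_mul, smul_sum, mul_smul]

end LogSumExp

section Rows

variable {ι F : Type*} [Fintype ι] [NormedAddCommGroup F] [NormedSpace ℝ F]

theorem sum_comp_proj_apply_single [DecidableEq ι] (L : ι → F →L[ℝ] ℝ) (i : ι) (v : F) :
    (∑ m, (L m).comp (ContinuousLinearMap.proj m : (ι → F) →L[ℝ] F)) (Pi.single i v) =
      L i v := by
  simp [Pi.single_apply, apply_ite]

theorem hasFDerivAt_sum_add_log_sum_exp [Nonempty ι] {φ ψ : F → ℝ} {φ' ψ' : F → F →L[ℝ] ℝ}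
    (hφ : ∀ k, HasFDerivAt φ (φ' k) k) (hψ : ∀ k, HasFDerivAt ψ (ψ' k) k) (K : ι → F) :
    HasFDerivAt (fun K : ι → F => ∑ i, φ (K i) + log (∑ i, exp (ψ (K i))))
      (∑ i, (φ' (K i) + softmax (fun m => ψ (K m)) i • ψ' (K i)).comp
        (ContinuousLinearMap.proj i)) K := by
  have hrow : ∀ {g : F → ℝ} {g' : F → F →L[ℝ] ℝ}, (∀ k, HasFDerivAt g (g' k) k) → ∀ i,
      HasFDerivAt (fun K : ι → F => g (K i)) ((g' (K i)).comp (ContinuousLinearMap.proj i)) K :=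
    fun hg i => (hg (K i)).comp K (hasFDerivAt_apply i K)
  refine ((HasFDerivAt.fun_sum (u := univ) fun i _ => hrow hφ i).add
    (HasFDerivAt.log_sum_exp (hrow hψ))).congr_fderiv ?_
  simp only [ContinuousLinearMap.add_comp, ContinuousLinearMap.smul_comp, sum_add_distrib]

end Rows

section DotProduct

variable {κ : Type*} [Fintype κ]

noncomputable def dotProductCLM (w : κ → ℝ) : (κ → ℝ) →L[ℝ] ℝ :=
  ∑ b, w b • ContinuousLinearMap.proj b

@[simp] theorem dotProductCLM_apply (w v : κ → ℝ) : dotProductCLM w v = ∑ b, w b * v b := by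
  simp [dotProductCLM]

theorem dotProductCLM_single [DecidableEq κ] (w : κ → ℝ) (a : κ) :
    dotProductCLM w (Pi.single a 1) = w a := by
  simp [Pi.single_apply]

theorem hasFDerivAt_sum_mul (w k : κ → ℝ) :
    HasFDerivAt (fun k : κ → ℝ => ∑ b, w b * k b) (dotProductCLM w) k :=
  (dotProductCLM w).hasFDerivAt.congr_of_eventuallyEq
    (.of_forall fun k => (dotProductCLM_apply w k).symm)

theorem hasFDerivAt_sum_mul_self (k : κ → ℝ) :
    HasFDerivAt (fun k : κ → ℝ => ∑ b, k b * k b) ((2 : ℝ) • dotProductCLM k) k := by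
  refine (HasFDerivAt.fun_sum (u := univ) fun b _ =>
    (hasFDerivAt_apply b k).mul (hasFDerivAt_apply b k)).congr_fderiv ?_
  ext v
  simp [mul_sum, two_mul]

end DotProduct

theorem hasFDerivAt_attention_row_energy {σ κ : Type*} [Fintype σ] [Nonempty σ] [Fintype κ]
    (α : ℝ) {β : ℝ} (hβ : β ≠ 0) (Q : σ → κ → ℝ) (k : κ → ℝ) :
    HasFDerivAt
      (fun k : κ → ℝ => α / 2 * ∑ b, k b * k b - β⁻¹ * log (∑ j, exp (β * ∑ b, Q j b * k b)))
      (α • dotProductCLM k -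
        ∑ j, softmax (fun j => β * ∑ b, Q j b * k b) j • dotProductCLM (Q j)) k := by
  refine (((hasFDerivAt_sum_mul_self k).const_mul (α / 2)).sub
    ((HasFDerivAt.log_sum_exp fun j => (hasFDerivAt_sum_mul (Q j) k).const_mul β).const_mul
      β⁻¹)).congr_fderiv ?_
  simp only [smul_smul, smul_sum, div_mul_cancel₀ α two_ne_zero]
  congr 1
  refine sum_congr rfl fun j _ => ?_
  rw [mul_comm _ β, inv_mul_cancel_left₀ hβ]

theorem energy_neg_grad_teacher_update_general
    (N S d : ℕ) (hN : 1 ≤ N) (hS : 1 ≤ S)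
    (β : ℝ) (hβ : 0 < β) (α : ℝ)
    (Q : Fin S → Fin d → ℝ)
    (E : (Fin N → Fin d → ℝ) → ℝ)
    (hE : E = fun K =>
      (α / 2) * ∑ i, (∑ a, K i a * K i a)
        - ∑ i, β⁻¹ * Real.log (∑ j, Real.exp (β * ∑ a, Q j a * K i a))
        + Real.log (∑ i, Real.exp ((1 / 2) * ∑ a, K i a * K i a))) :
    Differentiable ℝ E ∧
      ∀ (K : Fin N → Fin d → ℝ) (i : Fin N) (a : Fin d),
        -(fderiv ℝ E K (Pi.single i (Pi.single a 1))) =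
          (∑ j, (Real.exp (β * ∑ b, Q j b * K i b) /
              ∑ j', Real.exp (β * ∑ b, Q j' b * K i b)) * Q j a)
          - (α + Real.exp ((1 / 2) * ∑ b, K i b * K i b) /
              ∑ m, Real.exp ((1 / 2) * ∑ b, K m b * K m b)) * K i a := by
  have : Nonempty (Fin N) := ⟨⟨0, hN⟩⟩
  have : Nonempty (Fin S) := ⟨⟨0, hS⟩⟩
  have hE_rows : E = fun K => ∑ i, (α / 2 * ∑ b, K i b * K i b
      - β⁻¹ * log (∑ j, exp (β * ∑ b, Q j b * K i b)))
      + log (∑ i, exp (1 / 2 * ∑ b, K i b * K i b)) := by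
    simp only [hE, mul_sum, sum_sub_distrib]
  have hE_deriv := hasFDerivAt_sum_add_log_sum_exp (ι := Fin N)
    (hasFDerivAt_attention_row_energy α hβ.ne' Q)
    (fun k => (hasFDerivAt_sum_mul_self k).const_mul (1 / 2))
  subst hE_rows
  refine ⟨fun K => (hE_deriv K).differentiableAt, fun K i a => ?_⟩
  rw [(hE_deriv K).fderiv, sum_comp_proj_apply_single]
  simp only [add_apply, sub_apply, smul_apply, _root_.sum_apply, dotProductCLM_single, softmax,
    smul_eq_mul]
  ring

/-- Gradient identity underlying the MAP teacher-attention update. For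
`E(K) = (α/2)·∑ᵢ⟨kᵢ,kᵢ⟩ − ∑ᵢ β⁻¹·log(∑ⱼ exp(β·⟨qⱼ,kᵢ⟩)) + log(∑ᵢ exp(½·⟨kᵢ,kᵢ⟩))`,
`E` is differentiable and the `(i,a)` entry of `−∇_K E(K)` equals
`∑ⱼ softmax(β·Qkᵢ)ⱼ · Q j a − (α + pᵢ(K))·K i a`, where
`pᵢ(K) = exp(½·⟨kᵢ,kᵢ⟩)/∑ₘ exp(½·⟨kₘ,kₘ⟩)`. -/
theorem energy_neg_grad_teacher_update
    (N S d : ℕ) (hN : 1 ≤ N) (hS : 1 ≤ S) (hd : 1 ≤ d)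
    (β : ℝ) (hβ : 0 < β) (α : ℝ) (hα : 0 ≤ α)
    (Q : Fin S → Fin d → ℝ)
    (E : (Fin N → Fin d → ℝ) → ℝ)
    (hE : E = fun K =>
      (α / 2) * ∑ i, (∑ a, K i a * K i a)
        - ∑ i, β⁻¹ * Real.log (∑ j, Real.exp (β * ∑ a, Q j a * K i a))
        + Real.log (∑ i, Real.exp ((1 / 2) * ∑ a, K i a * K i a))) :
    Differentiable ℝ E ∧
      ∀ (K : Fin N → Fin d → ℝ) (i : Fin N) (a : Fin d),
        -(fderiv ℝ E K (Pi.single i (Pi.single a 1))) =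
          (∑ j, (Real.exp (β * ∑ b, Q j b * K i b) /
              ∑ j', Real.exp (β * ∑ b, Q j' b * K i b)) * Q j a)
          - (α + Real.exp ((1 / 2) * ∑ b, K i b * K i b) /
              ∑ m, Real.exp ((1 / 2) * ∑ b, K m b * K m b)) * K i a :=
  energy_neg_grad_teacher_update_general N S d hN hS β hβ α Q E hE
end

section
/- Let E₁ : ℝ^d → ℝ be convex and differentiable and E₂ : ℝ^d → ℝ be concave and differentiable. Suppose x, y ∈ ℝ^d satisfy the CCCP stationarity condition ∇E₁(y) = −∇E₂(x). Then the total energy does not increase: E₁(y) + E₂(y) ≤ E₁(x) + E₂(x). -/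
/-! A convex function lies above its tangent planes and a concave one below them, so
`E₁ y + ⟪∇E₁ y, x - y⟫ ≤ E₁ x` and `E₂ y ≤ E₂ x + ⟪∇E₂ x, y - x⟫`. The stationarity condition makes
the two linear terms equal, and adding the inequalities gives the descent. -/

open Set InnerProductSpace

theorem ConvexOn.add_fderiv_le {E : Type*} [NormedAddCommGroup E] [NormedSpace ℝ E]
    {s : Set E} {f : E → ℝ} {f' : E →L[ℝ] ℝ} {p q : E} (hf : ConvexOn ℝ s f)
    (hp : p ∈ s) (hq : q ∈ s) (hf' : HasFDerivAt f f' p) :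
    f p + f' (q - p) ≤ f q := by
  set ℓ : ℝ →ᵃ[ℝ] E := AffineMap.lineMap p q
  have hℓ : HasDerivAt ℓ (q - p) 0 := AffineMap.hasDerivAt_lineMap
  have hslope := (hf.comp_affineMap ℓ).le_slope_of_hasDerivAt
    (show (0 : ℝ) ∈ ℓ ⁻¹' s by simpa [ℓ]) (show (1 : ℝ) ∈ ℓ ⁻¹' s by simpa [ℓ]) one_pos
    (hf'.comp_hasDerivAt_of_eq 0 hℓ (by simp [ℓ]))
  simp only [slope_def_field, Function.comp_apply, AffineMap.lineMap_apply_zero,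
    AffineMap.lineMap_apply_one, sub_zero, div_one, ℓ] at hslope
  linarith

theorem ConcaveOn.le_add_fderiv {E : Type*} [NormedAddCommGroup E] [NormedSpace ℝ E]
    {s : Set E} {f : E → ℝ} {f' : E →L[ℝ] ℝ} {p q : E} (hf : ConcaveOn ℝ s f)
    (hp : p ∈ s) (hq : q ∈ s) (hf' : HasFDerivAt f f' p) :
    f q ≤ f p + f' (q - p) := by
  have := hf.neg.add_fderiv_le hp hq hf'.neg
  simp only [Pi.neg_apply, neg_apply] at this
  linarith

section Gradient

variable {F : Type*} [NormedAddCommGroup F] [InnerProductSpace ℝ F] [CompleteSpace F]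
  {s : Set F} {f : F → ℝ} {g p q : F}

theorem ConvexOn.add_inner_gradient_le (hf : ConvexOn ℝ s f) (hp : p ∈ s) (hq : q ∈ s)
    (hg : HasGradientAt f g p) : f p + ⟪g, q - p⟫_ℝ ≤ f q := by
  simpa using hf.add_fderiv_le hp hq hg.hasFDerivAt

theorem ConcaveOn.le_add_inner_gradient (hf : ConcaveOn ℝ s f) (hp : p ∈ s) (hq : q ∈ s)
    (hg : HasGradientAt f g p) : f q ≤ f p + ⟪g, q - p⟫_ℝ := by
  simpa using hf.le_add_fderiv hp hq hg.hasFDerivAt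

end Gradient

/-- One-step descent property of the Concave-Convex Procedure (CCCP): if `E₁` is
convex and differentiable, `E₂` is concave and differentiable, and `x, y` satisfy
the CCCP stationarity condition `∇E₁(y) = −∇E₂(x)`, then the total energy does
not increase: `E₁(y) + E₂(y) ≤ E₁(x) + E₂(x)`. -/
theorem cccp_one_step_descent
    (d : ℕ) (E₁ E₂ : EuclideanSpace ℝ (Fin d) → ℝ)
    (h₁conv : ConvexOn ℝ Set.univ E₁) (h₁diff : Differentiable ℝ E₁)
    (h₂conc : ConcaveOn ℝ Set.univ E₂) (h₂diff : Differentiable ℝ E₂)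
    (x y : EuclideanSpace ℝ (Fin d))
    (hstat : gradient E₁ y = -gradient E₂ x) :
    E₁ y + E₂ y ≤ E₁ x + E₂ x := by
  have h₁ := h₁conv.add_inner_gradient_le (mem_univ y) (mem_univ x) (h₁diff y).hasGradientAt
  have h₂ := h₂conc.le_add_inner_gradient (mem_univ x) (mem_univ y) (h₂diff x).hasGradientAt
  have hcancel : ⟪gradient E₁ y, x - y⟫_ℝ = ⟪gradient E₂ x, y - x⟫_ℝ := by
    rw [hstat, inner_neg_left, ← inner_neg_right, neg_sub]
  linarith
end

section
/- Let x_1, …, x_N ∈ ℝ^d with N ≥ 1 and β > 0. Define E₁(ξ) = ½·⟨ξ, ξ⟩ and E₂(ξ) = −β⁻¹·log(∑_{i=1}^N exp(β·⟨x_i, ξ⟩)). Then for any x, y ∈ ℝ^d, the CCCP equation ∇E₁(y) = −∇E₂(x) holds if and only if y = ∑_{i=1}^N softmax(β·Xᵀx)_i · x_i; i.e., the CCCP applied to the Hopfield energy E = E₁ + E₂ produces exactly the update rule ξ^{t+1} = X·softmax(β·Xᵀξ^t). -/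
open scoped RealInnerProductSpace

section
variable {F : Type*} [NormedAddCommGroup F] [InnerProductSpace ℝ F]

theorem hasFDerivAt_exp_mul_inner (β : ℝ) (y a : F) :
    HasFDerivAt (fun ξ : F => Real.exp (β * ⟪y, ξ⟫))
      (Real.exp (β * ⟪y, a⟫) • β • innerSL ℝ y) a :=
  (Real.hasDerivAt_exp _).comp_hasFDerivAt a ((innerSL ℝ y).hasFDerivAt.const_mul β)

variable [CompleteSpace F]

theorem HasGradientAt.neg {f : F → ℝ} {g a : F} (h : HasGradientAt f g a) :
    HasGradientAt (fun ξ => -f ξ) (-g) a := by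
  rw [hasGradientAt_iff_hasFDerivAt, map_neg]
  exact (hasGradientAt_iff_hasFDerivAt.mp h).neg

theorem hasGradientAt_half_inner_self (a : F) :
    HasGradientAt (fun ξ : F => (1 / 2 : ℝ) * ⟪ξ, ξ⟫) a a := by
  rw [hasGradientAt_iff_hasFDerivAt]
  refine (((hasFDerivAt_id a).inner ℝ (hasFDerivAt_id a)).const_mul (1 / 2 : ℝ)).congr_fderiv ?_
  ext v
  simp [fderivInnerCLM, real_inner_comm]
  ring

theorem hasGradientAt_inv_mul_log_sum_exp_mul_inner {ι : Type*} [Fintype ι] [Nonempty ι]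
    {β : ℝ} (hβ : β ≠ 0) (x : ι → F) (a : F) :
    HasGradientAt (fun ξ : F => β⁻¹ * Real.log (∑ i, Real.exp (β * ⟪x i, ξ⟫)))
      (∑ i, (Real.exp (β * ⟪x i, a⟫) / ∑ m, Real.exp (β * ⟪x m, a⟫)) • x i) a := by
  rw [hasGradientAt_iff_hasFDerivAt]
  have hS : 0 < ∑ m, Real.exp (β * ⟪x m, a⟫) :=
    Finset.sum_pos (fun i _ => Real.exp_pos _) Finset.univ_nonempty
  have hsum := HasFDerivAt.fun_sum fun i (_ : i ∈ Finset.univ) =>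
    hasFDerivAt_exp_mul_inner β (x i) a
  refine (((Real.hasDerivAt_log hS.ne').comp_hasFDerivAt a hsum).const_mul β⁻¹).congr_fderiv ?_
  ext v
  simp only [InnerProductSpace.toDual_apply_apply, _root_.smul_apply,
    FunLike.coe_sum, Finset.sum_apply, innerSL_apply_apply, smul_eq_mul,
    sum_inner, real_inner_smul_left, Finset.mul_sum]
  refine Finset.sum_congr rfl fun i _ => ?_
  field_simp

end

/-- For `E₁(ξ) = ½·⟨ξ,ξ⟩` and `E₂(ξ) = −β⁻¹·log(∑ᵢ exp(β·⟨xᵢ,ξ⟩))`, the CCCP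
equation `∇E₁(y) = −∇E₂(x)` holds iff `y = ∑ᵢ softmax(β·Xᵀx)ᵢ • xᵢ`; i.e. the
CCCP applied to the Hopfield energy produces exactly the update rule
`ξ^{t+1} = X·softmax(β·Xᵀξ^t)`. -/
theorem cccp_hopfield_update_rule
    (N d : ℕ) (hN : 1 ≤ N) (β : ℝ) (hβ : 0 < β)
    (x : Fin N → EuclideanSpace ℝ (Fin d))
    (E₁ E₂ : EuclideanSpace ℝ (Fin d) → ℝ)
    (hE₁ : E₁ = fun ξ => (1 / 2) * ⟪ξ, ξ⟫)
    (hE₂ : E₂ = fun ξ =>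
      -(β⁻¹ * Real.log (∑ i, Real.exp (β * ⟪x i, ξ⟫)))) :
    ∀ a b : EuclideanSpace ℝ (Fin d),
      gradient E₁ b = -gradient E₂ a ↔
        b = ∑ i, (Real.exp (β * ⟪x i, a⟫) /
          ∑ m, Real.exp (β * ⟪x m, a⟫)) • x i := by
  intro a b
  have : Nonempty (Fin N) := ⟨⟨0, hN⟩⟩
  have h₁ : gradient E₁ b = b := hE₁ ▸ (hasGradientAt_half_inner_self b).gradient
  have h₂ : gradient E₂ a
      = -∑ i, (Real.exp (β * ⟪x i, a⟫) / ∑ m, Real.exp (β * ⟪x m, a⟫)) • x i :=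
    hE₂ ▸ (hasGradientAt_inv_mul_log_sum_exp_mul_inner hβ.ne' x a).neg.gradient
  rw [h₁, h₂, neg_neg]
end

section
/- Let x_1, …, x_N ∈ ℝ^d with N ≥ 1 and β > 0, let E(ξ) = ½·⟨ξ, ξ⟩ − β⁻¹·log(∑_{i=1}^N exp(β·⟨x_i, ξ⟩)), and consider the iteration ξ^{t+1} = ∑_{i=1}^N softmax(β·Xᵀξ^t)_i · x_i starting from any ξ^0 ∈ ℝ^d. Then the real sequence (E(ξ^t))_{t≥0} is monotone nonincreasing, bounded below (by −β⁻¹·log N − ½·M² with M = max_i ‖x_i‖), and hence converges to a limit L ∈ ℝ. -/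
open scoped RealInnerProductSpace

/-- Energy convergence of the Hopfield iteration: for the energy
`E(ξ) = ½·⟨ξ,ξ⟫ − β⁻¹·log(∑ᵢ exp(β·⟨xᵢ,ξ⟫))` and the iteration
`ξ^{t+1} = ∑ᵢ softmax(β·Xᵀξ^t)ᵢ • xᵢ` from any start point, the sequence
`(E(ξ^t))` is monotone nonincreasing, bounded below by `−β⁻¹·log N − ½·M²`
where `M = maxᵢ ‖xᵢ‖`, and hence converges to some limit `L ∈ ℝ`. -/
theorem hopfield_iteration_energy_converges
    (N d : ℕ) (hN : 1 ≤ N) (β : ℝ) (hβ : 0 < β)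
    (x : Fin N → EuclideanSpace ℝ (Fin d))
    (M : ℝ) (hM : IsGreatest (Set.range fun i => ‖x i‖) M)
    (E : EuclideanSpace ℝ (Fin d) → ℝ)
    (hE : E = fun ξ =>
      (1 / 2) * ⟪ξ, ξ⟫ - β⁻¹ * Real.log (∑ i, Real.exp (β * ⟪x i, ξ⟫)))
    (ξ : ℕ → EuclideanSpace ℝ (Fin d))
    (hstep : ∀ t, ξ (t + 1) =
      ∑ i, (Real.exp (β * ⟪x i, ξ t⟫) /
        ∑ m, Real.exp (β * ⟪x m, ξ t⟫)) • x i) :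
    (∀ t, E (ξ (t + 1)) ≤ E (ξ t)) ∧
      (∀ t, -(β⁻¹ * Real.log N) - (1 / 2) * M ^ 2 ≤ E (ξ t)) ∧
      ∃ L : ℝ, Filter.Tendsto (fun t => E (ξ t)) Filter.atTop (nhds L) := by
  have hNpos : 0 < N := hN
  have : Nonempty (Fin N) := Fin.pos_iff_nonempty.mp hNpos
  set S : EuclideanSpace ℝ (Fin d) → ℝ :=
    fun η => ∑ i, Real.exp (β * ⟪x i, η⟫) with hSdef
  have hS : ∀ η, 0 < S η := fun η =>
    Finset.sum_pos (fun i _ => Real.exp_pos _) Finset.univ_nonempty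
  have hβ0 : (0:ℝ) ≤ β⁻¹ := le_of_lt (inv_pos.mpr hβ)
  have hββ : β⁻¹ * β = 1 := inv_mul_cancel₀ hβ.ne'
  -- M ≥ 0
  obtain ⟨i0, hi0⟩ := hM.1
  have hM0 : 0 ≤ M := hi0 ▸ norm_nonneg _
  -- monotone step
  have mono : ∀ t, E (ξ (t + 1)) ≤ E (ξ t) := by
    intro t
    set a := ξ t with ha
    set b := ξ (t + 1) with hbdef
    have hb : b = ∑ i, (Real.exp (β * ⟪x i, a⟫) / S a) • x i := hstep t
    set w : Fin N → ℝ := fun i => Real.exp (β * ⟪x i, a⟫) / S a with hw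
    have hw0 : ∀ i ∈ Finset.univ, (0:ℝ) ≤ w i := fun i _ =>
      div_nonneg (Real.exp_pos _).le (hS a).le
    have hw1 : ∑ i, w i = 1 := by
      rw [hw]
      rw [← Finset.sum_div]
      exact div_self (hS a).ne'
    have hEval : ∀ η, E η = (1 / 2) * ⟪η, η⟫ - β⁻¹ * Real.log (S η) :=
      fun η => by rw [hE]
    have hbc : ∀ c : EuclideanSpace ℝ (Fin d),
        ⟪b, c⟫ = ∑ i, w i * ⟪x i, c⟫ := by
      intro c
      rw [hb, sum_inner]
      exact Finset.sum_congr rfl fun i _ => real_inner_smul_left _ _ _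
    have jensen :
        Real.exp (∑ i, w i • (β * ⟪x i, b - a⟫)) ≤
          ∑ i, w i * Real.exp (β * ⟪x i, b - a⟫) :=
      convexOn_exp.map_sum_le hw0 hw1 (fun _ _ => Set.mem_univ _)
    have hsum_inner : ∑ i, w i * ⟪x i, b - a⟫ = ⟪b, b - a⟫ := (hbc _).symm
    have hexp_arg : ∑ i, w i • (β * ⟪x i, b - a⟫) = β * ⟪b, b - a⟫ := by
      simp only [smul_eq_mul]
      rw [← hsum_inner, Finset.mul_sum]
      exact Finset.sum_congr rfl fun i _ => by ring
    have hSb : S a * Real.exp (β * ⟪b, b - a⟫) ≤ S b := by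
      have h1 : S a * Real.exp (β * ⟪b, b - a⟫) ≤
          S a * ∑ i, w i * Real.exp (β * ⟪x i, b - a⟫) := by
        apply mul_le_mul_of_nonneg_left _ (hS a).le
        rw [← hexp_arg]; exact jensen
      refine h1.trans_eq ?_
      rw [Finset.mul_sum]
      refine Finset.sum_congr rfl fun i _ => ?_
      have harg : Real.exp (β * ⟪x i, a⟫) * Real.exp (β * ⟪x i, b - a⟫) =
          Real.exp (β * ⟪x i, b⟫) := by
        rw [← Real.exp_add]
        congr 1
        rw [inner_sub_right]
        ring
      have hSne : S a ≠ 0 := (hS a).ne'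
      calc S a * (w i * Real.exp (β * ⟪x i, b - a⟫))
          = Real.exp (β * ⟪x i, a⟫) / S a * S a *
              Real.exp (β * ⟪x i, b - a⟫) := by rw [hw]; ring
        _ = Real.exp (β * ⟪x i, a⟫) * Real.exp (β * ⟪x i, b - a⟫) := by
            rw [div_mul_cancel₀ _ hSne]
        _ = Real.exp (β * ⟪x i, b⟫) := harg
    have hlog : Real.log (S a) + β * ⟪b, b - a⟫ ≤ Real.log (S b) := by
      have := Real.log_le_log (by positivity) hSb
      rwa [Real.log_mul (hS a).ne' (Real.exp_pos _).ne', Real.log_exp] at this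
    -- combine
    have hinv : β⁻¹ * Real.log (S a) + ⟪b, b - a⟫ ≤ β⁻¹ * Real.log (S b) := by
      have := mul_le_mul_of_nonneg_left hlog hβ0
      calc β⁻¹ * Real.log (S a) + ⟪b, b - a⟫
          = β⁻¹ * (Real.log (S a) + β * ⟪b, b - a⟫) := by
            rw [mul_add, ← mul_assoc, hββ, one_mul]
        _ ≤ β⁻¹ * Real.log (S b) := this
    have hq : (0:ℝ) ≤ ⟪b - a, b - a⟫ := real_inner_self_nonneg
    have hexp1 : ⟪b, b - a⟫ = ⟪b, b⟫ - ⟪b, a⟫ := inner_sub_right _ _ _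
    have hexp2 : ⟪b - a, b - a⟫ = ⟪b, b⟫ - ⟪b, a⟫ - (⟪a, b⟫ - ⟪a, a⟫) := by
      rw [inner_sub_left, inner_sub_right, inner_sub_right]
    have hcomm : ⟪a, b⟫ = ⟪b, a⟫ := real_inner_comm b a
    rw [hEval, hEval]
    linarith [hinv, hq, hexp1, hexp2]
  -- lower bound
  have hEval : ∀ η, E η = (1 / 2) * ⟪η, η⟫ - β⁻¹ * Real.log (S η) :=
    fun η => by rw [hE]
  have lower : ∀ η, -(β⁻¹ * Real.log N) - (1 / 2) * M ^ 2 ≤ E η := by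
    intro η
    have hub : ∀ i ∈ Finset.univ, Real.exp (β * ⟪x i, η⟫) ≤
        Real.exp (β * (M * ‖η‖)) := by
      intro i _
      apply Real.exp_le_exp.mpr
      apply mul_le_mul_of_nonneg_left _ hβ.le
      calc ⟪x i, η⟫ ≤ ‖x i‖ * ‖η‖ := real_inner_le_norm _ _
        _ ≤ M * ‖η‖ := mul_le_mul_of_nonneg_right (hM.2 ⟨i, rfl⟩) (norm_nonneg _)
    have hSle : S η ≤ N * Real.exp (β * (M * ‖η‖)) := by
      calc S η ≤ ∑ _i : Fin N, Real.exp (β * (M * ‖η‖)) :=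
            Finset.sum_le_sum hub
        _ = N * Real.exp (β * (M * ‖η‖)) := by
            rw [Finset.sum_const, Finset.card_univ, Fintype.card_fin,
              nsmul_eq_mul]
    have hlog : Real.log (S η) ≤ Real.log N + β * (M * ‖η‖) := by
      have h := Real.log_le_log (hS η) hSle
      rwa [Real.log_mul (by positivity) (Real.exp_pos _).ne',
        Real.log_exp] at h
    have hinv : β⁻¹ * Real.log (S η) ≤ β⁻¹ * Real.log N + M * ‖η‖ := by
      have := mul_le_mul_of_nonneg_left hlog hβ0
      calc β⁻¹ * Real.log (S η) ≤ β⁻¹ * (Real.log N + β * (M * ‖η‖)) := this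
        _ = β⁻¹ * Real.log N + M * ‖η‖ := by
            rw [mul_add, ← mul_assoc, hββ, one_mul]
    have hnorm : ⟪η, η⟫ = ‖η‖ ^ 2 := real_inner_self_eq_norm_sq η
    have hsq : (0:ℝ) ≤ (‖η‖ - M) ^ 2 := sq_nonneg _
    rw [hEval]
    nlinarith [hinv, hnorm, hsq]
  refine ⟨mono, fun t => lower _, ?_⟩
  have anti : Antitone fun t => E (ξ t) := antitone_nat_of_succ_le mono
  have hbdd : BddBelow (Set.range fun t => E (ξ t)) := by
    refine ⟨-(β⁻¹ * Real.log N) - (1 / 2) * M ^ 2, ?_⟩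
    rintro y ⟨t, rfl⟩
    exact lower _
  exact ⟨_, tendsto_atTop_ciInf anti hbdd⟩
end
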